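/- Let M ∈ ℕ, let ψ_1, …, ψ_M : ℝ² → ℝ be twice continuously differentiable and compactly supported, and let f : ℝ² → ℝ be twice continuously differentiable and compactly supported. Then ∫_{ℝ²} (Λ_M f)(x)·f(x) dμ(x) = −(1/2) Σ_{ℓ=1}^{M} ∫_{ℝ²} {ψ_ℓ,f}(x)² dμ(x) ≤ 0, where Λ_M f = (1/2) Σ_{ℓ=1}^{M} {ψ_ℓ,{ψ_ℓ,f}}. -/

import Mathlib

/-!
For a `C²` stream function `ψ`, the transport operator `{ψ, ·}` is skew-adjoint on compactly
supported `C¹` functions: by the Leibniz rule `{ψ, u}·v + u·{ψ, v} = {ψ, u v}`, and the integral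
of a bracket `{ψ, g} = ∂₁ψ ∂₂g − ∂₂ψ ∂₁g` vanishes, because integrating each term by parts moves
the derivatives onto `ψ`, where they cancel by the symmetry of `D²ψ`. Applied with
`u = {ψ, f}` and `v = f`, skew-adjointness gives `∫ {ψ, {ψ, f}} f = −∫ {ψ, f}²`, and summing over
`ℓ` gives the identity, whose right-hand side is visibly nonpositive.
-/

open MeasureTheory

/-- The Poisson bracket `{f,g} = ∂₁f ∂₂g − ∂₂f ∂₁g = ∇⊥f · ∇g` on `ℝ²`. -/
noncomputable def poissonBracket (f g : ℝ × ℝ → ℝ) (x : ℝ × ℝ) : ℝ :=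
  fderiv ℝ f x (1, 0) * fderiv ℝ g x (0, 1) - fderiv ℝ f x (0, 1) * fderiv ℝ g x (1, 0)

/-- The noise-induced differential elliptic (NIDE) operator
`Λ_M f = (1/2) Σ_{ℓ=1}^M {ψ_ℓ, {ψ_ℓ, f}}`. -/
noncomputable def NIDE (M : ℕ) (ψ : Fin M → ℝ × ℝ → ℝ) (f : ℝ × ℝ → ℝ) (x : ℝ × ℝ) : ℝ :=
  (1 / 2) * ∑ ℓ : Fin M, poissonBracket (ψ ℓ) (poissonBracket (ψ ℓ) f) x

section DirectionalDerivative

variable {E F : Type*} [NormedAddCommGroup E] [NormedSpace ℝ E]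
  [NormedAddCommGroup F] [NormedSpace ℝ F] {m n : WithTop ℕ∞}

theorem ContDiff.fderiv_apply_const {f : E → F} (hf : ContDiff ℝ n f) (hmn : m + 1 ≤ n) (w : E) :
    ContDiff ℝ m fun x => fderiv ℝ f x w :=
  (hf.fderiv_right hmn).clm_apply contDiff_const

theorem ContDiff.continuous_fderiv_apply_const {f : E → F} (hf : ContDiff ℝ n f) (hn : n ≠ 0)
    (w : E) : Continuous fun x => fderiv ℝ f x w :=
  (hf.continuous_fderiv hn).clm_apply continuous_const

theorem ContDiff.fderiv_fderiv_apply_comm {f : E → F} (hf : ContDiff ℝ 2 f) (x v w : E) :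
    fderiv ℝ (fun y => fderiv ℝ f y v) x w = fderiv ℝ (fun y => fderiv ℝ f y w) x v := by
  have hd : DifferentiableAt ℝ (fderiv ℝ f) x :=
    (hf.fderiv_right (m := 1) le_rfl).differentiable one_ne_zero x
  rw [fderiv_clm_apply hd (differentiableAt_const v),
    fderiv_clm_apply hd (differentiableAt_const w)]
  simpa using
    (hf.contDiffAt.isSymmSndFDerivAt (by simp [minSmoothness_of_isRCLikeNormedField])).eq w v

variable [FiniteDimensional ℝ E] [MeasurableSpace E] [BorelSpace E]
  {μ : Measure E} [μ.IsAddHaarMeasure]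

theorem integral_mul_fderiv_eq_neg_fderiv_mul_of_hasCompactSupport {f g : E → ℝ}
    (hf : ContDiff ℝ 1 f) (hg : ContDiff ℝ 1 g) (hg_supp : HasCompactSupport g) (w : E) :
    ∫ x, f x * fderiv ℝ g x w ∂μ = -∫ x, fderiv ℝ f x w * g x ∂μ := by
  apply integral_mul_fderiv_eq_neg_fderiv_mul_of_integrable
  · exact ((hf.continuous_fderiv_apply_const one_ne_zero w).mul hg.continuous)
      |>.integrable_of_hasCompactSupport hg_supp.mul_left
  · exact (hf.continuous.mul (hg.continuous_fderiv_apply_const one_ne_zero w))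
      |>.integrable_of_hasCompactSupport (hg_supp.fderiv_apply ℝ w).mul_left
  · exact (hf.continuous.mul hg.continuous).integrable_of_hasCompactSupport hg_supp.mul_left
  · exact fun x _ => hf.differentiable one_ne_zero x
  · exact fun x _ => hg.differentiable one_ne_zero x

end DirectionalDerivative

section PoissonBracket

variable {p f u v : ℝ × ℝ → ℝ} {m n : WithTop ℕ∞}

theorem ContDiff.poissonBracket (hp : ContDiff ℝ n p) (hf : ContDiff ℝ n f) (hmn : m + 1 ≤ n) :
    ContDiff ℝ m (poissonBracket p f) :=
  ((hp.fderiv_apply_const hmn _).mul (hf.fderiv_apply_const hmn _)).sub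
    ((hp.fderiv_apply_const hmn _).mul (hf.fderiv_apply_const hmn _))

theorem ContDiff.continuous_poissonBracket (hp : ContDiff ℝ n p) (hf : ContDiff ℝ n f)
    (hn : n ≠ 0) : Continuous (_root_.poissonBracket p f) :=
  ((hp.continuous_fderiv_apply_const hn _).mul (hf.continuous_fderiv_apply_const hn _)).sub
    ((hp.continuous_fderiv_apply_const hn _).mul (hf.continuous_fderiv_apply_const hn _))

theorem HasCompactSupport.poissonBracket (hf : HasCompactSupport f) :
    HasCompactSupport (poissonBracket p f) :=
  (hf.fderiv_apply ℝ (0, 1)).mul_left.sub (hf.fderiv_apply ℝ (1, 0)).mul_left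

theorem poissonBracket_mul (hu : Differentiable ℝ u) (hv : Differentiable ℝ v) (x : ℝ × ℝ) :
    poissonBracket p (fun y => u y * v y) x
      = poissonBracket p u x * v x + u x * poissonBracket p v x := by
  simp only [poissonBracket, fderiv_fun_mul (hu x) (hv x), add_apply,
    FunLike.coe_smul, Pi.smul_apply, smul_eq_mul]
  ring

variable {μ : Measure (ℝ × ℝ)} [μ.IsAddHaarMeasure]

theorem integral_poissonBracket_eq_zero (hp : ContDiff ℝ 2 p) (hf : ContDiff ℝ 1 f)
    (hf_supp : HasCompactSupport f) : ∫ x, poissonBracket p f x ∂μ = 0 := by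
  have hp' (v : ℝ × ℝ) : ContDiff ℝ 1 fun x => fderiv ℝ p x v :=
    hp.fderiv_apply_const one_add_one_eq_two.le v
  have integrable (v w : ℝ × ℝ) : Integrable (fun x => fderiv ℝ p x v * fderiv ℝ f x w) μ :=
    ((hp' v).continuous.mul (hf.continuous_fderiv_apply_const one_ne_zero w))
      |>.integrable_of_hasCompactSupport (hf_supp.fderiv_apply ℝ w).mul_left
  simp only [poissonBracket]
  rw [integral_sub (integrable _ _) (integrable _ _),
    integral_mul_fderiv_eq_neg_fderiv_mul_of_hasCompactSupport (hp' _) hf hf_supp,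
    integral_mul_fderiv_eq_neg_fderiv_mul_of_hasCompactSupport (hp' _) hf hf_supp]
  simp only [hp.fderiv_fderiv_apply_comm _ (1, 0) (0, 1), sub_self]

theorem integral_poissonBracket_mul_eq_neg (hp : ContDiff ℝ 2 p) (hu : ContDiff ℝ 1 u)
    (hu_supp : HasCompactSupport u) (hv : ContDiff ℝ 1 v) :
    ∫ x, poissonBracket p u x * v x ∂μ = -∫ x, u x * poissonBracket p v x ∂μ := by
  have hp1 : ContDiff ℝ 1 p := hp.of_le one_le_two
  have integrable_left : Integrable (fun x => poissonBracket p u x * v x) μ :=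
    ((hp1.continuous_poissonBracket hu one_ne_zero).mul hv.continuous)
      |>.integrable_of_hasCompactSupport hu_supp.poissonBracket.mul_right
  have integrable_right : Integrable (fun x => u x * poissonBracket p v x) μ :=
    (hu.continuous.mul (hp1.continuous_poissonBracket hv one_ne_zero))
      |>.integrable_of_hasCompactSupport hu_supp.mul_right
  have leibniz : ∫ x, (poissonBracket p u x * v x + u x * poissonBracket p v x) ∂μ = 0 := by
    simp only [← poissonBracket_mul (hu.differentiable one_ne_zero)
      (hv.differentiable one_ne_zero)]
    exact integral_poissonBracket_eq_zero hp (hu.mul hv) hu_supp.mul_right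
  rw [integral_add integrable_left integrable_right] at leibniz
  linarith

theorem integral_poissonBracket_poissonBracket_mul_self (hp : ContDiff ℝ 2 p)
    (hf : ContDiff ℝ 2 f) (hf_supp : HasCompactSupport f) :
    ∫ x, poissonBracket p (poissonBracket p f) x * f x ∂μ
      = -∫ x, poissonBracket p f x ^ 2 ∂μ := by
  rw [integral_poissonBracket_mul_eq_neg hp (hp.poissonBracket hf one_add_one_eq_two.le)
    hf_supp.poissonBracket (hf.of_le one_le_two)]
  simp only [sq]

end PoissonBracket

theorem integral_NIDE_mul_self {M : ℕ} {ψ : Fin M → ℝ × ℝ → ℝ} {f : ℝ × ℝ → ℝ}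
    (hψ : ∀ ℓ, ContDiff ℝ 2 (ψ ℓ)) (hf : ContDiff ℝ 2 f) (hf_supp : HasCompactSupport f)
    {μ : Measure (ℝ × ℝ)} [μ.IsAddHaarMeasure] :
    ∫ x, NIDE M ψ f x * f x ∂μ = -(1 / 2) * ∑ ℓ, ∫ x, poissonBracket (ψ ℓ) f x ^ 2 ∂μ := by
  have integrable (ℓ : Fin M) :
      Integrable (fun x => poissonBracket (ψ ℓ) (poissonBracket (ψ ℓ) f) x * f x) μ :=
    (((hψ ℓ).of_le one_le_two).continuous_poissonBracket
      ((hψ ℓ).poissonBracket hf one_add_one_eq_two.le) one_ne_zero).mul hf.continuous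
      |>.integrable_of_hasCompactSupport hf_supp.mul_left
  simp only [NIDE, mul_assoc, Finset.sum_mul, integral_const_mul,
    integral_finsetSum _ fun ℓ _ => integrable ℓ,
    integral_poissonBracket_poissonBracket_mul_self (hψ _) hf hf_supp, Finset.sum_neg_distrib]
  ring

theorem NIDE_dissipates_enstrophy_general (M : ℕ) (ψ : Fin M → ℝ × ℝ → ℝ)
    (hψ : ∀ ℓ, ContDiff ℝ 2 (ψ ℓ))
    (f : ℝ × ℝ → ℝ) (hf : ContDiff ℝ 2 f) (hfsupp : HasCompactSupport f) :
    (∫ x, NIDE M ψ f x * f x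
        = -(1 / 2) * ∑ ℓ : Fin M, ∫ x, (poissonBracket (ψ ℓ) f x) ^ 2) ∧
    (∫ x, NIDE M ψ f x * f x) ≤ 0 := by
  have identity := integral_NIDE_mul_self (μ := volume) hψ hf hfsupp
  refine ⟨identity, identity ▸ ?_⟩
  have enstrophy_nonneg : 0 ≤ ∑ ℓ, ∫ x, poissonBracket (ψ ℓ) f x ^ 2 :=
    Finset.sum_nonneg fun ℓ _ => integral_nonneg fun x => sq_nonneg _
  linarith

theorem NIDE_dissipates_enstrophy (M : ℕ) (ψ : Fin M → ℝ × ℝ → ℝ)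
    (hψ : ∀ ℓ, ContDiff ℝ 2 (ψ ℓ)) (hψsupp : ∀ ℓ, HasCompactSupport (ψ ℓ))
    (f : ℝ × ℝ → ℝ) (hf : ContDiff ℝ 2 f) (hfsupp : HasCompactSupport f) :
    (∫ x, NIDE M ψ f x * f x
        = -(1 / 2) * ∑ ℓ : Fin M, ∫ x, (poissonBracket (ψ ℓ) f x) ^ 2) ∧
    (∫ x, NIDE M ψ f x * f x) ≤ 0 :=
  NIDE_dissipates_enstrophy_general M ψ hψ f hf hfsupp
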